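/- If κ is C^(n)-superstrong (witnessed by j : V → M), then κ ∈ C^(n). -/

import Mathlib

/-!  Common framework: the language of set theory, Lévy hierarchy,
Σₙ-elementarity of classes of `ZFSet`s, cumulative hierarchy, etc. -/

open FirstOrder

/-- The language of set theory: a single binary relation symbol (membership). -/
def LSet : FirstOrder.Language where
  Functions _ := Empty
  Relations n := match n with
    | 2 => Unit
    | _ => Empty

/-- `V` (the universe of ZFC sets) as an `LSet`-structure. -/
noncomputable instance : LSet.Structure ZFSet where
  funMap := fun f _ => f.elim
  RelMap := fun {n} r xs => match n, r, xs with
    | 2, _, xs => xs 0 ∈ xs 1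
    | 0, r, _ => r.elim
    | 1, r, _ => r.elim
    | _+3, r, _ => r.elim

/-- Any class of sets as an `LSet`-structure, with the inherited membership relation. -/
noncomputable instance (S : Set ZFSet) : LSet.Structure S where
  funMap := fun f _ => f.elim
  RelMap := fun {n} r xs => match n, r, xs with
    | 2, _, xs => (xs 0 : ZFSet) ∈ (xs 1 : ZFSet)
    | 0, r, _ => r.elim
    | 1, r, _ => r.elim
    | _+3, r, _ => r.elim

mutual
  /-- The Σₙ formulas of the Lévy-style prenex hierarchy. -/
  inductive IsSigmaFml : ℕ → ∀ {k : ℕ}, LSet.BoundedFormula Empty k → Prop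
    | of_qf {k} {φ : LSet.BoundedFormula Empty k} : φ.IsQF → IsSigmaFml 0 φ
    | of_pi {n k} {φ : LSet.BoundedFormula Empty k} : IsPiFml n φ → IsSigmaFml (n+1) φ
    | ex {n k} {φ : LSet.BoundedFormula Empty (k+1)} :
        IsSigmaFml (n+1) φ → IsSigmaFml (n+1) φ.ex
  /-- The Πₙ formulas of the Lévy-style prenex hierarchy. -/
  inductive IsPiFml : ℕ → ∀ {k : ℕ}, LSet.BoundedFormula Empty k → Prop
    | of_qf {k} {φ : LSet.BoundedFormula Empty k} : φ.IsQF → IsPiFml 0 φ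
    | of_sigma {n k} {φ : LSet.BoundedFormula Empty k} : IsSigmaFml n φ → IsPiFml (n+1) φ
    | all {n k} {φ : LSet.BoundedFormula Empty (k+1)} :
        IsPiFml (n+1) φ → IsPiFml (n+1) φ.all
end

/-- Satisfaction of a formula (with `k` parameters) in `V`. -/
def SatV {k : ℕ} (φ : LSet.BoundedFormula Empty k) (xs : Fin k → ZFSet) : Prop :=
  φ.Realize (fun e => e.elim) xs

/-- Satisfaction of a formula (with `k` parameters) in a class `S` of sets. -/
def SatIn (S : Set ZFSet) {k : ℕ} (φ : LSet.BoundedFormula Empty k) (xs : Fin k → S) : Prop :=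
  φ.Realize (fun e => e.elim) xs

/-- `S ≼ₙ V` : Σₙ formulas with parameters in `S` are absolute between `S` and `V`. -/
def SigmaElementary (n : ℕ) (S : Set ZFSet) : Prop :=
  ∀ {k : ℕ} (φ : LSet.BoundedFormula Empty k), IsSigmaFml n φ →
    ∀ xs : Fin k → S, (SatIn S φ xs ↔ SatV φ (fun i => (xs i : ZFSet)))

/-- The cumulative hierarchy `V_α`, as the class of sets of rank `< α`. -/
def Vset (α : Ordinal) : Set ZFSet := {x | x.rank < α}

universe u

/-- `H_κ`: the class of sets hereditarily of cardinality `< κ`. -/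
def Hset (κ : Cardinal.{u}) : Set ZFSet.{u} :=
  {x | ∃ t : ZFSet, t.IsTransitive ∧ x ⊆ t ∧ Cardinal.mk t.toSet < Cardinal.lift.{u+1} κ}

/-- The class `C⁽ⁿ⁾ = {α : V_α ≼ₙ V}`. -/
def Cclass (n : ℕ) : Set Ordinal := {α | SigmaElementary n (Vset α)}

/-- `x` is a (von Neumann) ordinal: a transitive set of transitive sets. -/
def ZFOrd (x : ZFSet) : Prop := x.IsTransitive ∧ ∀ y ∈ x, ZFSet.IsTransitive y

/-- A transitive class of sets. -/
def TransClass (M : Set ZFSet) : Prop := ∀ x ∈ M, ∀ y, y ∈ x → y ∈ M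

/-- `j` is an elementary embedding of `V` into the class `M`. -/
structure ElemEmbV (M : Set ZFSet) (j : ZFSet → ZFSet) : Prop where
  maps : ∀ x, j x ∈ M
  elem : ∀ {k : ℕ} (φ : LSet.BoundedFormula Empty k) (xs : Fin k → ZFSet),
    SatV φ xs ↔ SatIn M φ (fun i => ⟨j (xs i), maps (xs i)⟩)

/-- `j` is an elementary embedding of the class `S` into the class `T`. -/
structure ElemEmbBetween (S T : Set ZFSet) (j : ZFSet → ZFSet) : Prop where
  maps : ∀ x ∈ S, j x ∈ T
  elem : ∀ {k : ℕ} (φ : LSet.BoundedFormula Empty k) (xs : Fin k → ZFSet) (h : ∀ i, xs i ∈ S),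
    SatIn S φ (fun i => ⟨xs i, h i⟩) ↔ SatIn T φ (fun i => ⟨j (xs i), maps _ (h i)⟩)

/-- `κ` is the critical point of `j`: `j` fixes all ordinals `< κ` and moves `κ`. -/
def IsCritPt (j : ZFSet → ZFSet) (κ : ZFSet) : Prop :=
  ZFOrd κ ∧ (∀ x, x ∈ κ → j x = x) ∧ j κ ≠ κ

/-- An ultrafilter on (all subsets of) the set `base`. -/
structure ZFUltra (base : ZFSet) where
  sets : Set ZFSet
  sub : ∀ X ∈ sets, X ⊆ base
  base_mem : base ∈ sets
  empty_not_mem : (∅ : ZFSet) ∉ sets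
  upward : ∀ X ∈ sets, ∀ Y, Y ⊆ base → X ⊆ Y → Y ∈ sets
  ultra : ∀ X, X ⊆ base → (X ∈ sets ∨ ZFSet.sep (fun y => y ∉ X) base ∈ sets)

/-- `κ`-completeness: any family of fewer than `|κ|` many members has its
intersection (with the base) in the ultrafilter. -/
def ZFUltra.Complete {b : ZFSet} (κ : ZFSet) (U : ZFUltra b) : Prop :=
  ∀ F : Set ZFSet, F ⊆ U.sets → Cardinal.mk F < Cardinal.mk κ.toSet →
    ZFSet.sep (fun x => ∀ X ∈ F, x ∈ X) b ∈ U.sets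

/-- Nonprincipality: the complement of every singleton is in the ultrafilter. -/
def ZFUltra.Nonprincipal {b : ZFSet} (U : ZFUltra b) : Prop :=
  ∀ x, ZFSet.sep (fun y => y ≠ x) b ∈ U.sets

/-- Normality for an ultrafilter on an ordinal `κ`: closure under diagonal
intersections. -/
def ZFUltra.NormalOn (κ : ZFSet) (U : ZFUltra κ) : Prop :=
  ∀ A : ZFSet → ZFSet, (∀ α ∈ κ, A α ∈ U.sets) →
    ZFSet.sep (fun α => ∀ β ∈ α, α ∈ A β) κ ∈ U.sets

/-- `P_κ(γ)`: the set of subsets of `γ` of cardinality `< |κ|`. -/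
noncomputable def Pkappa (κ γ : ZFSet) : ZFSet :=
  ZFSet.sep (fun x => Cardinal.mk x.toSet < Cardinal.mk κ.toSet) (ZFSet.powerset γ)

/-- Fineness for an ultrafilter on `P_κ(γ)`. -/
def ZFUltra.Fine (κ γ : ZFSet) (U : ZFUltra (Pkappa κ γ)) : Prop :=
  ∀ a ∈ γ, ZFSet.sep (fun x => a ∈ x) (Pkappa κ γ) ∈ U.sets

/-- Normality for an ultrafilter on `P_κ(γ)`: closure under diagonal intersections. -/
def ZFUltra.NormalP (κ γ : ZFSet) (U : ZFUltra (Pkappa κ γ)) : Prop :=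
  ∀ A : ZFSet → ZFSet, (∀ a ∈ γ, A a ∈ U.sets) →
    ZFSet.sep (fun x => ∀ a ∈ x, x ∈ A a) (Pkappa κ γ) ∈ U.sets

/-- `κ` is `γ`-supercompact: there is a `κ`-complete fine normal ultrafilter on `P_κ(γ)`. -/
def GammaSupercompact (κ γ : ZFSet) : Prop :=
  ∃ U : ZFUltra (Pkappa κ γ), U.Complete κ ∧ U.Fine κ γ ∧ U.NormalP κ γ

/-- `κ` is supercompact. -/
def Supercompact (κ : ZFSet) : Prop :=
  ZFOrd κ ∧ ∀ γ : ZFSet, ZFOrd γ → GammaSupercompact κ γ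

/-- `κ` is measurable: it carries a `κ`-complete nonprincipal ultrafilter. -/
def ZFMeasurable (κ : ZFSet) : Prop :=
  ZFOrd κ ∧ ∃ U : ZFUltra κ, U.Complete κ ∧ U.Nonprincipal

/-- `κ` is `λ`-strong. -/
def LambdaStrong (κ : ZFSet) (lam : Ordinal) : Prop :=
  ∃ (M : Set ZFSet) (j : ZFSet → ZFSet), TransClass M ∧ ElemEmbV M j ∧ IsCritPt j κ ∧
    lam < (j κ).rank ∧ (∀ x, x.rank < lam → x ∈ M)

/-- `κ` is `λ`-`C⁽ⁿ⁾`-strong. -/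
def LambdaCnStrong (n : ℕ) (κ : ZFSet) (lam : Ordinal) : Prop :=
  ∃ (M : Set ZFSet) (j : ZFSet → ZFSet), TransClass M ∧ ElemEmbV M j ∧ IsCritPt j κ ∧
    lam < (j κ).rank ∧ (∀ x, x.rank < lam → x ∈ M) ∧ (j κ).rank ∈ Cclass n

/-- `κ` is superstrong. -/
def Superstrong (κ : ZFSet) : Prop :=
  ∃ (M : Set ZFSet) (j : ZFSet → ZFSet), TransClass M ∧ ElemEmbV M j ∧ IsCritPt j κ ∧
    (∀ x, x.rank < (j κ).rank → x ∈ M)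

/-- `κ` is `C⁽ⁿ⁾`-superstrong. -/
def CnSuperstrong (n : ℕ) (κ : ZFSet) : Prop :=
  ∃ (M : Set ZFSet) (j : ZFSet → ZFSet), TransClass M ∧ ElemEmbV M j ∧ IsCritPt j κ ∧
    (∀ x, x.rank < (j κ).rank → x ∈ M) ∧ (j κ).rank ∈ Cclass n

/-- `κ` is `λ`-`C⁽ⁿ⁾`-extendible. -/
def LamCnExtendible (n : ℕ) (κ : ZFSet) (lam : Ordinal) : Prop :=
  ∃ (μ : Ordinal) (j : ZFSet → ZFSet), ElemEmbBetween (Vset lam) (Vset μ) j ∧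
    IsCritPt j κ ∧ lam < (j κ).rank ∧ (j κ).rank ∈ Cclass n

/-- `κ` is `C⁽ⁿ⁾`-extendible. -/
def CnExtendible (n : ℕ) (κ : ZFSet) : Prop :=
  ∀ lam : Ordinal, κ.rank < lam → LamCnExtendible n κ lam

/-- `κ` is extendible. -/
def Extendible (κ : ZFSet) : Prop :=
  ∀ lam : Ordinal, κ.rank < lam →
    ∃ (μ : Ordinal) (j : ZFSet → ZFSet), ElemEmbBetween (Vset lam) (Vset μ) j ∧
      IsCritPt j κ ∧ lam < (j κ).rank

/-! Let `j : V → M` witness that `κ` is `C⁽ⁿ⁾`-superstrong. The statement "`w` is the union of the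
powersets of the members of a family `T` obeying the von Neumann recursion, whose ranks are bounded
by and cofinal in those of the members of `b`" is first order and absolute for transitive classes
containing `V_{rank b}`. Applied to `b = κ` it gives `j(V_κ) = V_{j(κ)}`, and applied to the members
of `κ` it gives `j(V_γ) = V_γ` for `γ < κ`, whence `j` is the identity on `V_κ`. Relativizing a
formula to `V_κ` and moving it across `j` then shows `V_κ ≼ V_{j(κ)}`, and `V_{j(κ)} ≼ₙ V`. -/

open FirstOrder.Language BoundedFormula ZFSet

namespace LSet

def mem {α : Type*} [LSet.Structure α] (a b : α) : Prop :=
  Structure.RelMap (L := LSet) (n := 2) () ![a, b]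

@[simp] theorem mem_zfset {a b : ZFSet} : mem a b ↔ a ∈ b := Iff.rfl

@[simp] theorem mem_subtype {S : Set ZFSet} {a b : S} : mem a b ↔ (a : ZFSet) ∈ (b : ZFSet) :=
  Iff.rfl

def memF {k : ℕ} (i j : Fin k) : LSet.BoundedFormula Empty k :=
  Relations.boundedFormula₂ (L := LSet) () (&i) (&j)

def bAll {k : ℕ} (i : Fin k) (φ : LSet.BoundedFormula Empty (k + 1)) :
    LSet.BoundedFormula Empty k :=
  ((memF (Fin.last k) i.castSucc).imp φ).all

def bEx {k : ℕ} (i : Fin k) (φ : LSet.BoundedFormula Empty (k + 1)) :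
    LSet.BoundedFormula Empty k :=
  (memF (Fin.last k) i.castSucc ⊓ φ).ex

def subF {k : ℕ} (i j : Fin k) : LSet.BoundedFormula Empty k :=
  bAll i (memF (Fin.last k) j.castSucc)

section Realize

variable {α : Type*} [LSet.Structure α] {k : ℕ} (v : Empty → α) (xs : Fin k → α)

@[simp] theorem realize_memF (i j : Fin k) : (memF i j).Realize v xs ↔ mem (xs i) (xs j) :=
  realize_rel₂

@[simp] theorem realize_bAll (i : Fin k) (φ : LSet.BoundedFormula Empty (k + 1)) :
    (bAll i φ).Realize v xs ↔ ∀ a, mem a (xs i) → φ.Realize v (Fin.snoc xs a) := by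
  simp [bAll]

@[simp] theorem realize_bEx (i : Fin k) (φ : LSet.BoundedFormula Empty (k + 1)) :
    (bEx i φ).Realize v xs ↔ ∃ a, mem a (xs i) ∧ φ.Realize v (Fin.snoc xs a) := by
  simp [bEx]

@[simp] theorem realize_subF (i j : Fin k) :
    (subF i j).Realize v xs ↔ ∀ a, mem a (xs i) → mem a (xs j) := by
  simp [subF]

end Realize

def embeddingOfMemIff {α β : Type*} [LSet.Structure α] [LSet.Structure β] (f : β → α)
    (hf : Function.Injective f) (hmem : ∀ a b, mem (f a) (f b) ↔ mem a b) : β ↪[LSet] α where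
  toFun := f
  inj' := hf
  map_fun' := fun g => Empty.elim g
  map_rel' := fun {n} r xs => match n, r with
    | 2, () => by
      have hxs : xs = ![xs 0, xs 1] := by ext i; fin_cases i <;> rfl
      have hfxs : f ∘ xs = ![f (xs 0), f (xs 1)] := by ext i; fin_cases i <;> rfl
      rw [hfxs, hxs]
      exact hmem (xs 0) (xs 1)

def relativize : ∀ {k : ℕ}, LSet.BoundedFormula Empty k → LSet.BoundedFormula Empty (k + 1)
  | _, .falsum => .falsum
  | _, .equal t₁ t₂ =>
    .equal (t₁.relabel (Sum.map id Fin.succ)) (t₂.relabel (Sum.map id Fin.succ))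
  | _, .rel R ts => .rel R fun i => (ts i).relabel (Sum.map id Fin.succ)
  | _, .imp φ ψ => (relativize φ).imp (relativize ψ)
  | k, .all φ => .all ((memF (Fin.last (k + 1)) 0).imp (relativize φ))

section Relativize

variable {α β : Type*} [LSet.Structure α] [LSet.Structure β] (e : β ↪[LSet] α) {w : α}
  (v : Empty → α) (v' : Empty → β)

theorem realize_relabel_succ {k : ℕ} (t : LSet.Term (Empty ⊕ Fin k)) (xs : Fin k → β) :
    (t.relabel (Sum.map id Fin.succ)).realize (Sum.elim v (Fin.cons w (e ∘ xs))) =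
      e (t.realize (Sum.elim v' xs)) := by
  rw [Term.realize_relabel, ← HomClass.realize_term]
  congr 1
  ext (x | i)
  · exact x.elim
  · rfl

theorem realize_relativize (hw : ∀ a, mem a w ↔ a ∈ Set.range e) {k : ℕ}
    (φ : LSet.BoundedFormula Empty k) (xs : Fin k → β) :
    (relativize φ).Realize v (Fin.cons w (e ∘ xs)) ↔ φ.Realize v' xs := by
  induction φ with
  | falsum => rfl
  | equal t₁ t₂ =>
    simp only [relativize, BoundedFormula.Realize, realize_relabel_succ e v v', e.injective.eq_iff]
  | rel R ts =>
    simp only [relativize, BoundedFormula.Realize, realize_relabel_succ e v v']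
    exact e.map_rel R _
  | imp φ ψ ihφ ihψ => exact imp_congr (ihφ xs) (ihψ xs)
  | all φ ih =>
    simp only [relativize, realize_all, realize_imp, realize_memF, Fin.snoc_last]
    simp only [← Fin.cons_snoc_eq_snoc_cons, Fin.cons_zero, hw, Set.forall_mem_range,
      ← Fin.comp_snoc, ih]

end Relativize

/-- The intended instance is `w = V_α`, `T = {V_γ | γ < α}` and `b` any set of rank `α`: the first
field is the recursion `V_γ = ⋃_{δ < γ} 𝒫 V_δ`, the next two bound the ranks of the members of `T`
by, and make them cofinal in, those of the members of `b`, and the last says `w = ⋃_{u ∈ T} 𝒫 u`. -/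
structure IsVonNeumannCode {α : Type*} [LSet.Structure α] (w T b : α) : Prop where
  mem_iff_of_mem : ∀ v, mem v T → ∀ x, (mem x v ↔ ∃ u, mem u T ∧ mem u v ∧ ∀ z, mem z x → mem z u)
  exists_not_mem : ∀ v, mem v T → ∃ y, mem y b ∧ ¬ mem y v
  exists_subset : ∀ y, mem y b → ∃ u, mem u T ∧ ∀ z, mem z y → mem z u
  mem_iff : ∀ x, (mem x w ↔ ∃ u, mem u T ∧ ∀ z, mem z x → mem z u)

-- Variables `0, 1, 2` are `w, T, b`; each quantifier binds the next index.
def vonNeumannCodeFormula : LSet.BoundedFormula Empty 3 :=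
  bAll 1 (.all ((memF 4 3).iff (bEx 1 (memF 5 3 ⊓ subF 4 5)))) ⊓
  bAll 1 (bEx 2 (∼(memF 4 3))) ⊓
  bAll 2 (bEx 1 (subF 3 4)) ⊓
  .all ((memF 3 0).iff (bEx 1 (subF 3 4)))

theorem realize_vonNeumannCodeFormula {α : Type*} [LSet.Structure α] (v : Empty → α)
    (xs : Fin 3 → α) :
    vonNeumannCodeFormula.Realize v xs ↔ IsVonNeumannCode (xs 0) (xs 1) (xs 2) := by
  simp only [vonNeumannCodeFormula, Fin.isValue, Nat.reduceAdd, realize_inf, realize_bAll,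
    realize_all, Nat.succ_eq_add_one, realize_iff, realize_memF, realize_bEx, realize_subF,
    realize_not, and_assoc, Fin.snoc_apply_zero]
  exact ⟨fun ⟨h₁, h₂, h₃, h₄⟩ => ⟨h₁, h₂, h₃, h₄⟩, fun ⟨h₁, h₂, h₃, h₄⟩ => ⟨h₁, h₂, h₃, h₄⟩⟩

end LSet

noncomputable def vonNeumannLevels (o : Ordinal) : ZFSet :=
  ZFSet.range fun γ : Set.Iio o => V_ γ

theorem mem_vonNeumannLevels {o : Ordinal} {u : ZFSet} :
    u ∈ vonNeumannLevels o ↔ ∃ γ < o, V_ γ = u := by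
  simp [vonNeumannLevels]

theorem isVonNeumannCode_vonNeumann (b : ZFSet) :
    LSet.IsVonNeumannCode (V_ b.rank) (vonNeumannLevels b.rank) b where
  mem_iff_of_mem v hv x := by
    obtain ⟨γ, hγ, rfl⟩ := mem_vonNeumannLevels.1 hv
    simp only [LSet.mem_zfset]
    refine ⟨fun hx => ?_, fun ⟨u, _, hu, hxu⟩ => mem_vonNeumann_of_subset hxu hu⟩
    have hxγ := mem_vonNeumann.1 hx
    exact ⟨V_ x.rank, mem_vonNeumannLevels.2 ⟨_, hxγ.trans hγ, rfl⟩, vonNeumann_mem_of_lt hxγ,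
      subset_vonNeumann_self x⟩
  exists_not_mem v hv := by
    obtain ⟨γ, hγ, rfl⟩ := mem_vonNeumannLevels.1 hv
    obtain ⟨y, hy, hγy⟩ := lt_rank_iff.1 hγ
    exact ⟨y, hy, fun h => (mem_vonNeumann.1 h).not_ge hγy⟩
  exists_subset y hy :=
    ⟨V_ y.rank, mem_vonNeumannLevels.2 ⟨_, rank_lt_of_mem hy, rfl⟩, subset_vonNeumann_self y⟩
  mem_iff x := by
    simp only [LSet.mem_zfset, mem_vonNeumannLevels, mem_vonNeumann']
    exact ⟨fun ⟨γ, hγ, hx⟩ => ⟨_, ⟨γ, hγ, rfl⟩, hx⟩, fun ⟨_, ⟨γ, hγ, rfl⟩, hx⟩ => ⟨γ, hγ, hx⟩⟩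

theorem TransClass.forall_mem_iff_subset {M : Set ZFSet} (hM : TransClass M) {x y : ZFSet}
    (hx : x ∈ M) : (∀ z : M, (z : ZFSet) ∈ x → (z : ZFSet) ∈ y) ↔ x ⊆ y :=
  ⟨fun h z hz => h ⟨z, hM x hx z hz⟩ hz, fun h _ hz => h hz⟩

namespace LSet.IsVonNeumannCode

variable {M : Set ZFSet} {w T b : M} (hM : TransClass M) (h : IsVonNeumannCode w T b)
  (hV : ∀ x : ZFSet, x.rank < (b : ZFSet).rank → x ∈ M)
include hM h

theorem rank_lt_of_mem {v : ZFSet} (hv : v ∈ (T : ZFSet)) (hvV : v = V_ v.rank) :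
    v.rank < (b : ZFSet).rank := by
  obtain ⟨y, hy, hyv⟩ := h.exists_not_mem ⟨v, hM _ T.2 v hv⟩ hv
  simp only [mem_subtype] at hyv
  rw [hvV, mem_vonNeumann, not_lt] at hyv
  exact hyv.trans_lt (ZFSet.rank_lt_of_mem hy)

include hV

theorem eq_vonNeumann_of_mem (v : ZFSet) (hv : v ∈ (T : ZFSet)) : v = V_ v.rank := by
  induction v using ZFSet.inductionOn with
  | _ v IH =>
  have hvM : v ∈ M := hM _ T.2 v hv
  ext x
  refine ⟨fun hx => mem_vonNeumann.2 (ZFSet.rank_lt_of_mem hx), fun hx => ?_⟩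
  obtain ⟨y, hyv, hxy⟩ := lt_rank_iff.1 (mem_vonNeumann.1 hx)
  obtain ⟨u, huT, huv, hyu⟩ :=
    (h.mem_iff_of_mem ⟨v, hvM⟩ hv ⟨y, hM v hvM y hyv⟩).1 hyv
  have hu : (u : ZFSet) = V_ (u : ZFSet).rank := IH u huv huT
  have hxu : x ⊆ u := by
    rw [hu, subset_vonNeumann]
    exact hxy.trans (rank_mono ((hM.forall_mem_iff_subset (hM v hvM y hyv)).1 hyu))
  have hxM : x ∈ M := hV x ((rank_mono hxu).trans_lt (h.rank_lt_of_mem hM huT hu))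
  exact (h.mem_iff_of_mem ⟨v, hvM⟩ hv ⟨x, hxM⟩).2
    ⟨u, huT, huv, (hM.forall_mem_iff_subset hxM).2 hxu⟩

theorem eq_vonNeumann : (w : ZFSet) = V_ (b : ZFSet).rank := by
  ext x
  rw [mem_vonNeumann]
  constructor
  · intro hx
    obtain ⟨u, huT, hxu⟩ := (h.mem_iff ⟨x, hM _ w.2 x hx⟩).1 hx
    have hxu' := (hM.forall_mem_iff_subset (y := u) (hM _ w.2 x hx)).1 hxu
    have hu := h.eq_vonNeumann_of_mem hM hV u huT
    exact (rank_mono hxu').trans_lt (h.rank_lt_of_mem hM huT hu)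
  · intro hx
    obtain ⟨y, hyb, hxy⟩ := lt_rank_iff.1 hx
    obtain ⟨u, huT, hyu⟩ := h.exists_subset ⟨y, hM _ b.2 y hyb⟩ hyb
    have hu := h.eq_vonNeumann_of_mem hM hV u huT
    have hxu : x ⊆ u := by
      rw [hu, subset_vonNeumann]
      exact hxy.trans (rank_mono ((hM.forall_mem_iff_subset (hM _ b.2 y hyb)).1 hyu))
    exact (h.mem_iff ⟨x, hV x hx⟩).2 ⟨u, huT, (hM.forall_mem_iff_subset (hV x hx)).2 hxu⟩

end LSet.IsVonNeumannCode

namespace ElemEmbV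

variable {M : Set ZFSet} {j : ZFSet → ZFSet} (hM : TransClass M) (hj : ElemEmbV M j)

include hj in
theorem apply_mem_apply_iff {x y : ZFSet} : j x ∈ j y ↔ x ∈ y := by
  simpa [SatV, SatIn] using (hj.elem (LSet.memF 0 1) ![x, y]).symm

include hj in
theorem isVonNeumannCode_apply (b : ZFSet) :
    LSet.IsVonNeumannCode (⟨j (V_ b.rank), hj.maps _⟩ : M)
      ⟨j (vonNeumannLevels b.rank), hj.maps _⟩ ⟨j b, hj.maps b⟩ :=
  (LSet.realize_vonNeumannCodeFormula _ _).1 <|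
    (hj.elem LSet.vonNeumannCodeFormula ![V_ b.rank, vonNeumannLevels b.rank, b]).1 <|
      (LSet.realize_vonNeumannCodeFormula _ _).2 (isVonNeumannCode_vonNeumann b)

include hM hj

theorem apply_subset_apply {x y : ZFSet} (h : x ⊆ y) : j x ⊆ j y := by
  have := (hj.elem (LSet.subF 0 1) ![x, y]).1 (by simpa [SatV] using fun a (ha : a ∈ x) => h ha)
  simp only [SatIn, LSet.realize_subF, LSet.mem_subtype] at this
  exact (hM.forall_mem_iff_subset (hj.maps x)).1 this

theorem satIn_iff_of_forall_apply_eq {w : ZFSet} (hfix : ∀ x ∈ w, j x = x) {S T : Set ZFSet}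
    (hS : ∀ x, x ∈ S ↔ x ∈ w) (hT : ∀ x, x ∈ T ↔ x ∈ j w) {k : ℕ}
    (φ : LSet.BoundedFormula Empty k) (xs : Fin k → S) (ys : Fin k → T)
    (hxy : ∀ i, (ys i : ZFSet) = xs i) : SatIn S φ xs ↔ SatIn T φ ys := by
  have hTM : T ⊆ M := fun x hx => hM _ (hj.maps w) x ((hT x).1 hx)
  let eS : S ↪[LSet] ZFSet :=
    LSet.embeddingOfMemIff Subtype.val Subtype.val_injective fun _ _ => Iff.rfl
  let eT : T ↪[LSet] M :=
    LSet.embeddingOfMemIff (Set.inclusion hTM) (Set.inclusion_injective hTM) fun _ _ => Iff.rfl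
  have hwS : ∀ a, LSet.mem a w ↔ a ∈ Set.range eS := fun a =>
    ⟨fun ha => ⟨⟨a, (hS a).2 ha⟩, rfl⟩, by rintro ⟨b, rfl⟩; exact (hS b).1 b.2⟩
  have hwT : ∀ a, LSet.mem a (⟨j w, hj.maps w⟩ : M) ↔ a ∈ Set.range eT := fun a =>
    ⟨fun ha => ⟨⟨a, (hT a).2 ha⟩, rfl⟩, by rintro ⟨b, rfl⟩; exact (hT b).1 b.2⟩
  have henv : (fun i => ⟨j (Fin.cons (α := fun _ => ZFSet) w (eS ∘ xs) i), hj.maps _⟩ :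
      Fin (k + 1) → M) = Fin.cons ⟨j w, hj.maps w⟩ (eT ∘ ys) := by
    funext i
    cases i using Fin.cases with
    | zero => rfl
    | succ i => exact Subtype.ext ((hfix _ ((hS _).1 (xs i).2)).trans (hxy i).symm)
  rw [SatIn, ← LSet.realize_relativize eS _ _ hwS, SatIn,
    ← LSet.realize_relativize eT _ _ hwT, ← henv]
  exact hj.elem _ _

theorem apply_vonNeumann_rank {b : ZFSet} (hV : ∀ x : ZFSet, x.rank < (j b).rank → x ∈ M) :
    j (V_ b.rank) = V_ (j b).rank :=
  (hj.isVonNeumannCode_apply b).eq_vonNeumann hM hV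

theorem apply_vonNeumann_rank_of_apply_eq {b y : ZFSet}
    (hV : ∀ x : ZFSet, x.rank < (j b).rank → x ∈ M) (hy : y ∈ b) (hjy : j y = y) :
    j (V_ y.rank) = V_ y.rank := by
  have hmem : j (V_ y.rank) ∈ j (vonNeumannLevels b.rank) :=
    hj.apply_mem_apply_iff.2 (mem_vonNeumannLevels.2 ⟨_, rank_lt_of_mem hy, rfl⟩)
  have heq := (hj.isVonNeumannCode_apply b).eq_vonNeumann_of_mem hM hV _ hmem
  have hsub : y ⊆ j (V_ y.rank) := by
    simpa [hjy] using hj.apply_subset_apply hM (subset_vonNeumann_self y)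
  have hnotmem : j y ∉ j (V_ y.rank) := by
    rw [hj.apply_mem_apply_iff, mem_vonNeumann]
    exact lt_irrefl _
  rw [hjy] at hnotmem
  have hrank : (j (V_ y.rank)).rank = y.rank := by
    refine le_antisymm ?_ (rank_mono hsub)
    rw [heq, mem_vonNeumann, not_lt] at hnotmem
    exact hnotmem
  rw [heq, hrank]

theorem apply_eq_self_of_rank_lt {o : Ordinal} (hfix : ∀ γ < o, j (V_ γ) = V_ γ) (x : ZFSet)
    (hx : x.rank < o) : j x = x := by
  induction hr : x.rank using WellFoundedLT.induction generalizing x with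
  | _ γ IH =>
  subst hr
  have hsub : j x ⊆ V_ x.rank := hfix _ hx ▸ hj.apply_subset_apply hM (subset_vonNeumann_self x)
  have hfix_lt : ∀ z, z.rank < x.rank → j z = z := fun z hz => IH _ hz z (hz.trans hx) rfl
  ext z
  constructor
  · intro hz
    rwa [← hfix_lt z (mem_vonNeumann.1 (hsub hz)), hj.apply_mem_apply_iff] at hz
  · intro hz
    rwa [← hfix_lt z (rank_lt_of_mem hz), hj.apply_mem_apply_iff]

end ElemEmbV

/-- Every `C⁽ⁿ⁾`-superstrong cardinal belongs to `C⁽ⁿ⁾`. -/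
theorem stmt10 (n : ℕ) (κ : ZFSet) (h : CnSuperstrong n κ) :
    κ.rank ∈ Cclass n := by
  obtain ⟨M, j, hM, hj, hc, hV, hCn⟩ := h
  have hκ : κ.IsOrdinal := isOrdinal_iff_forall_mem_isTransitive.2 hc.1
  have hfixV : ∀ γ < κ.rank, j (V_ γ) = V_ γ := fun γ hγ => by
    have hy : γ.toZFSet ∈ κ := hκ.toZFSet_rank_eq ▸ Ordinal.toZFSet_mem_toZFSet_iff.2 hγ
    simpa using hj.apply_vonNeumann_rank_of_apply_eq hM hV hy (hc.2.1 _ hy)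
  have hfix : ∀ x ∈ V_ κ.rank, j x = x := fun x hx =>
    hj.apply_eq_self_of_rank_lt hM hfixV x (mem_vonNeumann.1 hx)
  have himage : j (V_ κ.rank) = V_ (j κ).rank := hj.apply_vonNeumann_rank hM hV
  have hsub : Vset κ.rank ⊆ Vset (j κ).rank := fun x hx => by
    have := hj.apply_mem_apply_iff.2 (mem_vonNeumann.2 hx)
    rwa [hfix x (mem_vonNeumann.2 hx), himage, mem_vonNeumann] at this
  intro k φ hφ xs
  exact (hj.satIn_iff_of_forall_apply_eq hM hfix (S := Vset κ.rank) (T := Vset (j κ).rank)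
    (fun _ => mem_vonNeumann.symm) (fun _ => by rw [himage, mem_vonNeumann]; rfl) φ xs
    (Set.inclusion hsub ∘ xs) fun _ => rfl).trans (hCn φ hφ _)
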